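/- arXiv:1901.06356 — 2 statements merged into one kernel-verified Lean document; each statement's English description precedes it below -/
import Mathlib

section
/- The spectral norm of T satisfies ‖T‖₂ ≤ 4/h², where h = min{h_j : j = 0,…,N}; equivalently, ‖T‖₂ ≤ max_{j=0,…,N} 4/h_j². -/
open Matrix
open scoped Kronecker

noncomputable section

namespace Kawarada

/-- The spectral norm (largest singular value) of a real matrix:
the operator norm of the induced map between Euclidean spaces. -/
noncomputable def specNorm {m : Type*} [Fintype m] [DecidableEq m]
    (A : Matrix m m ℝ) : ℝ :=
  ‖LinearMap.toContinuousLinearMap (Matrix.toEuclideanLin A)‖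

/-- The `N × N` tridiagonal matrix `T` built from mesh steps `h 0, …, h N`.
Lean row/column index `i : Fin N` corresponds to the paper's index `i + 1`. -/
noncomputable def tridiag (N : ℕ) (h : ℕ → ℝ) : Matrix (Fin N) (Fin N) ℝ :=
  Matrix.of fun i p =>
    if (i : ℕ) = (p : ℕ) then -2 / (h i * h ((i : ℕ) + 1))
    else if (i : ℕ) = (p : ℕ) + 1 then 2 / (h i * (h i + h ((i : ℕ) + 1)))
    else if (p : ℕ) = (i : ℕ) + 1 then 2 / (h ((i : ℕ) + 1) * (h i + h ((i : ℕ) + 1)))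
    else 0

/-- `φ_{i,j,k}` for the paper's indices `i,j,k ≥ 1`. -/
noncomputable def phi (a b c q : ℝ) (h1 h2 h3 : ℕ → ℝ) (i j k : ℕ) : ℝ :=
  (a ^ 2 * (∑ ℓ ∈ Finset.range i, h1 ℓ) ^ 2 +
      b ^ 2 * (∑ ℓ ∈ Finset.range j, h2 ℓ) ^ 2 +
      c ^ 2 * (∑ ℓ ∈ Finset.range k, h3 ℓ) ^ 2) ^ (q / 2)

/-- Index type for the vectorization: `i` (the `Fin N1` component) varies fastest. -/
abbrev Idx (N1 N2 N3 : ℕ) := Fin N3 × Fin N2 × Fin N1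

/-- `φ` as a function of the vectorized index. -/
noncomputable def phiVec (N1 N2 N3 : ℕ) (a b c q : ℝ) (h1 h2 h3 : ℕ → ℝ)
    (p : Idx N1 N2 N3) : ℝ :=
  phi a b c q h1 h2 h3 ((p.2.2 : ℕ) + 1) ((p.2.1 : ℕ) + 1) ((p.1 : ℕ) + 1)

/-- The diagonal matrix `B` with entries `φ_{i,j,k}⁻¹`. -/
noncomputable def Bdiag (N1 N2 N3 : ℕ) (a b c q : ℝ) (h1 h2 h3 : ℕ → ℝ) :
    Matrix (Idx N1 N2 N3) (Idx N1 N2 N3) ℝ :=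
  Matrix.diagonal fun p => (phiVec N1 N2 N3 a b c q h1 h2 h3 p)⁻¹

/-- The matrices `M1, M2, M3`. -/
noncomputable def Mmat (N1 N2 N3 : ℕ) (a b c q : ℝ) (h1 h2 h3 : ℕ → ℝ) :
    Fin 3 → Matrix (Idx N1 N2 N3) (Idx N1 N2 N3) ℝ :=
  ![(a ^ 2)⁻¹ •
      (Bdiag N1 N2 N3 a b c q h1 h2 h3 *
        ((1 : Matrix (Fin N3) (Fin N3) ℝ) ⊗ₖ
          ((1 : Matrix (Fin N2) (Fin N2) ℝ) ⊗ₖ tridiag N1 h1))),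
    (b ^ 2)⁻¹ •
      (Bdiag N1 N2 N3 a b c q h1 h2 h3 *
        ((1 : Matrix (Fin N3) (Fin N3) ℝ) ⊗ₖ
          (tridiag N2 h2 ⊗ₖ (1 : Matrix (Fin N1) (Fin N1) ℝ)))),
    (c ^ 2)⁻¹ •
      (Bdiag N1 N2 N3 a b c q h1 h2 h3 *
        (tridiag N3 h3 ⊗ₖ
          ((1 : Matrix (Fin N2) (Fin N2) ℝ) ⊗ₖ (1 : Matrix (Fin N1) (Fin N1) ℝ))))]

/-- The minimum of the mesh steps `h σ j`, `j = 0, …, N`, in one direction. -/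
noncomputable def dirMin (N : ℕ) (h : ℕ → ℝ) : ℝ :=
  (Finset.range (N + 1)).inf' Finset.nonempty_range_add_one h

/-- The maximum of the mesh steps in one direction. -/
noncomputable def dirMax (N : ℕ) (h : ℕ → ℝ) : ℝ :=
  (Finset.range (N + 1)).sup' Finset.nonempty_range_add_one h

/-- `h = min{h_{σ,j}}`, the global minimal mesh step. -/
noncomputable def meshMin (N1 N2 N3 : ℕ) (h1 h2 h3 : ℕ → ℝ) : ℝ :=
  min (dirMin N1 h1) (min (dirMin N2 h2) (dirMin N3 h3))

/-- `H = max{h_{σ,j}}`, the global maximal mesh step. -/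
noncomputable def meshMax (N1 N2 N3 : ℕ) (h1 h2 h3 : ℕ → ℝ) : ℝ :=
  max (dirMax N1 h1) (max (dirMax N2 h2) (dirMax N3 h3))

/-- `β_min = (h²/2)(a² h_{1,0}² + b² h_{2,0}² + c² h_{3,0}²)^{q/2}`. -/
noncomputable def betaMin (N1 N2 N3 : ℕ) (a b c q : ℝ) (h1 h2 h3 : ℕ → ℝ) : ℝ :=
  meshMin N1 N2 N3 h1 h2 h3 ^ 2 / 2 *
    (a ^ 2 * h1 0 ^ 2 + b ^ 2 * h2 0 ^ 2 + c ^ 2 * h3 0 ^ 2) ^ (q / 2)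

/-- The CFL condition `τ/β_min < min{a², b², c²}`. -/
def CFL (N1 N2 N3 : ℕ) (a b c q : ℝ) (h1 h2 h3 : ℕ → ℝ) (τ : ℝ) : Prop :=
  τ / betaMin N1 N2 N3 a b c q h1 h2 h3 < min (a ^ 2) (min (b ^ 2) (c ^ 2))

/-- `φ_min = min φ_{i,j,k}` (for the grid-sizes `nσ + 2 ≥ 2`). -/
noncomputable def phiMin (n1 n2 n3 : ℕ) (a b c q : ℝ) (h1 h2 h3 : ℕ → ℝ) : ℝ :=
  Finset.univ.inf' Finset.univ_nonempty
    (phiVec (n1 + 2) (n2 + 2) (n3 + 2) a b c q h1 h2 h3)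

/-- The nonlinear source term `g`, acting componentwise: `g(v)_p = f(v_p)/φ_p`. -/
noncomputable def gvec (N1 N2 N3 : ℕ) (a b c q : ℝ) (h1 h2 h3 : ℕ → ℝ) (f : ℝ → ℝ)
    (v : Idx N1 N2 N3 → ℝ) : Idx N1 N2 N3 → ℝ :=
  fun p => f (v p) / phiVec N1 N2 N3 a b c q h1 h2 h3 p

/-- The LOD propagator
`Φ(τ) = ∏_{σ=1}^3 (I − (τ/2)M_σ)⁻¹ (I + (τ/2)M_σ)`. -/
noncomputable def Phi (N1 N2 N3 : ℕ) (a b c q : ℝ) (h1 h2 h3 : ℕ → ℝ) (τ : ℝ) :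
    Matrix (Idx N1 N2 N3) (Idx N1 N2 N3) ℝ :=
  (1 - (τ / 2) • Mmat N1 N2 N3 a b c q h1 h2 h3 0)⁻¹ *
    (1 + (τ / 2) • Mmat N1 N2 N3 a b c q h1 h2 h3 0) *
  ((1 - (τ / 2) • Mmat N1 N2 N3 a b c q h1 h2 h3 1)⁻¹ *
    (1 + (τ / 2) • Mmat N1 N2 N3 a b c q h1 h2 h3 1)) *
  ((1 - (τ / 2) • Mmat N1 N2 N3 a b c q h1 h2 h3 2)⁻¹ *
    (1 + (τ / 2) • Mmat N1 N2 N3 a b c q h1 h2 h3 2))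

theorem isHermitian_symPart {m : Type*} [Fintype m] (A : Matrix m m ℝ) :
    (((2 : ℝ)⁻¹ • (A + Aᵀ))).IsHermitian := by
  show _ᴴ = _
  ext i j
  simp [Matrix.conjTranspose_apply, Matrix.transpose_apply, Matrix.add_apply]
  ring

/-- The logarithmic norm associated with the spectral norm:
`μ(A) = λ_max((A + Aᵀ)/2)`. -/
noncomputable def logNorm {m : Type*} [Fintype m] [DecidableEq m]
    (A : Matrix m m ℝ) : ℝ :=
  ⨆ i, (isHermitian_symPart A).eigenvalues i

/-- The Euclidean (`ℓ²`) norm of a vector. -/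
noncomputable def vecNorm {m : Type*} [Fintype m] (x : m → ℝ) : ℝ :=
  Real.sqrt (∑ i, x i ^ 2)

/-!
Every mesh step is at least `h = min h_j`, so each diagonal entry of `T` is at most `2/h²` in
absolute value and each off-diagonal entry `2/(h_j (h_j + h_{j±1}))` at most `2/(h · 2h) = 1/h²`.
Hence every row and every column of `|T|` sums to at most `4/h²`, and Schur's test
`‖A‖₂² ≤ ‖A‖₁ ‖A‖_∞` gives `‖T‖₂ ≤ 4/h²`. The second form holds because `h` is one of the `h_j`.
-/

theorem sq_sum_mul_le_sum_abs_mul_sum_abs_mul_sq {ι : Type*} (s : Finset ι) (a x : ι → ℝ) :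
    (∑ j ∈ s, a j * x j) ^ 2 ≤ (∑ j ∈ s, |a j|) * ∑ j ∈ s, |a j| * x j ^ 2 :=
  Finset.sum_sq_le_sum_mul_sum_of_sq_le_mul s (fun _ _ => abs_nonneg _)
    (fun _ _ => by positivity) fun j _ => by rw [mul_pow, ← mul_assoc, ← sq, sq_abs]

/-- Schur's test. -/
theorem sum_sq_mulVec_le {m n : Type*} [Fintype m] [Fintype n] (A : Matrix m n ℝ) {R C : ℝ}
    (hR : 0 ≤ R) (hrow : ∀ i, ∑ j, |A i j| ≤ R) (hcol : ∀ j, ∑ i, |A i j| ≤ C) (x : n → ℝ) :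
    ∑ i, (A *ᵥ x) i ^ 2 ≤ R * C * ∑ j, x j ^ 2 := by
  calc ∑ i, (A *ᵥ x) i ^ 2 ≤ ∑ i, R * ∑ j, |A i j| * x j ^ 2 := by
        gcongr with i
        exact (sq_sum_mul_le_sum_abs_mul_sum_abs_mul_sq _ (A i) x).trans
          (mul_le_mul_of_nonneg_right (hrow i) (by positivity))
    _ = R * ∑ j, (∑ i, |A i j|) * x j ^ 2 := by
        rw [← Finset.mul_sum, Finset.sum_comm]
        simp_rw [Finset.sum_mul]
    _ ≤ R * ∑ j, C * x j ^ 2 := by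
        gcongr with j
        exact hcol j
    _ = R * C * ∑ j, x j ^ 2 := by rw [← Finset.mul_sum, mul_assoc]

theorem specNorm_le_of_abs_sum_le {m : Type*} [Fintype m] [DecidableEq m] (A : Matrix m m ℝ)
    {K : ℝ} (hK : 0 ≤ K) (hrow : ∀ i, ∑ j, |A i j| ≤ K) (hcol : ∀ j, ∑ i, |A i j| ≤ K) :
    specNorm A ≤ K := by
  refine ContinuousLinearMap.opNorm_le_bound _ hK fun x => ?_
  rw [LinearMap.coe_toContinuousLinearMap', Matrix.toLpLin_apply, EuclideanSpace.norm_eq,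
    EuclideanSpace.norm_eq, ← Real.sqrt_sq hK, ← Real.sqrt_mul (sq_nonneg K)]
  gcongr
  simpa only [PiLp.toLp_apply, Real.norm_eq_abs, sq_abs, sq K] using
    sum_sq_mulVec_le A hK hrow hcol (WithLp.ofLp x)

theorem exists_dirMin_eq (N : ℕ) (h : ℕ → ℝ) : ∃ j ≤ N, dirMin N h = h j := by
  obtain ⟨j, hj, hmin⟩ := Finset.exists_mem_eq_inf' Finset.nonempty_range_add_one h
  exact ⟨j, Nat.lt_succ_iff.1 (Finset.mem_range.1 hj), hmin⟩

theorem dirMin_le {N : ℕ} (h : ℕ → ℝ) {j : ℕ} (hj : j ≤ N) : dirMin N h ≤ h j :=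
  Finset.inf'_le h (Finset.mem_range.2 (Nat.lt_succ_of_le hj))

theorem dirMin_pos {N : ℕ} {h : ℕ → ℝ} (hpos : ∀ j ≤ N, 0 < h j) : 0 < dirMin N h := by
  obtain ⟨j, hj, hmin⟩ := exists_dirMin_eq N h
  exact hmin ▸ hpos j hj

def tridiagMajorant (N : ℕ) (d : ℝ) (i p : Fin N) : ℝ :=
  (if (i : ℕ) = p then 2 / d ^ 2 else 0) + (if (i : ℕ) = p + 1 then 1 / d ^ 2 else 0) +
    (if (p : ℕ) = i + 1 then 1 / d ^ 2 else 0)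

theorem tridiagMajorant_comm (N : ℕ) (d : ℝ) (i p : Fin N) :
    tridiagMajorant N d i p = tridiagMajorant N d p i := by
  simp only [tridiagMajorant, eq_comm (a := (i : ℕ))]
  ring

theorem sum_ite_le_of_subsingleton {ι : Type*} [Fintype ι] {P : ι → Prop} [DecidablePred P]
    {c : ℝ} (hc : 0 ≤ c) (hP : ∀ a b, P a → P b → a = b) :
    ∑ a, (if P a then c else 0) ≤ c := by
  rw [Finset.sum_ite, Finset.sum_const_zero, add_zero, Finset.sum_const, nsmul_eq_mul]
  refine mul_le_of_le_one_left hc ?_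
  exact_mod_cast Finset.card_le_one.2 fun a ha b hb =>
    hP a b (Finset.mem_filter.1 ha).2 (Finset.mem_filter.1 hb).2

theorem sum_tridiagMajorant_le (N : ℕ) (d : ℝ) (i : Fin N) :
    ∑ p, tridiagMajorant N d i p ≤ 4 / d ^ 2 := by
  simp only [tridiagMajorant, Finset.sum_add_distrib]
  have hdiag : ∑ p : Fin N, (if (i : ℕ) = p then 2 / d ^ 2 else 0) ≤ 2 / d ^ 2 :=
    sum_ite_le_of_subsingleton (by positivity) fun p q hp hq => Fin.ext (by omega)
  have hsubdiag : ∑ p : Fin N, (if (i : ℕ) = p + 1 then 1 / d ^ 2 else 0) ≤ 1 / d ^ 2 :=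
    sum_ite_le_of_subsingleton (by positivity) fun p q hp hq => Fin.ext (by omega)
  have hsuperdiag : ∑ p : Fin N, (if (p : ℕ) = i + 1 then 1 / d ^ 2 else 0) ≤ 1 / d ^ 2 :=
    sum_ite_le_of_subsingleton (by positivity) fun p q hp hq => Fin.ext (by omega)
  calc _ ≤ 2 / d ^ 2 + 1 / d ^ 2 + 1 / d ^ 2 := add_le_add (add_le_add hdiag hsubdiag) hsuperdiag
    _ = 4 / d ^ 2 := by ring

theorem abs_tridiag_le {N : ℕ} {h : ℕ → ℝ} (hpos : ∀ j ≤ N, 0 < h j) (i p : Fin N) :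
    |tridiag N h i p| ≤ tridiagMajorant N (dirMin N h) i p := by
  set d := dirMin N h
  have hd : 0 < d := dirMin_pos hpos
  have hdi : d ≤ h i := dirMin_le h i.2.le
  have hdi' : d ≤ h (i + 1) := dirMin_le h i.2
  have hi : 0 < h i := hd.trans_le hdi
  have hi' : 0 < h (i + 1) := hd.trans_le hdi'
  have hoff : (1 : ℝ) / d ^ 2 = 2 / (d * (d + d)) := by field_simp; ring
  simp only [tridiag, tridiagMajorant, Matrix.of_apply]
  split_ifs <;> try omega
  · rw [abs_div, abs_neg, abs_two, abs_of_pos (by positivity), sq]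
    simp only [add_zero]
    gcongr
  · rw [abs_of_pos (by positivity), hoff]
    simp only [zero_add, add_zero]
    gcongr
  · rw [abs_of_pos (by positivity), hoff]
    simp only [zero_add]
    gcongr
  · simp

theorem statement0_general (N : ℕ) (h : ℕ → ℝ) (hpos : ∀ j ≤ N, 0 < h j) :
    specNorm (tridiag N h) ≤ 4 / dirMin N h ^ 2 ∧
      specNorm (tridiag N h) ≤
        (Finset.range (N + 1)).sup' Finset.nonempty_range_add_one (fun j => 4 / h j ^ 2) := by
  have hrow (i : Fin N) : ∑ p, |tridiag N h i p| ≤ 4 / dirMin N h ^ 2 :=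
    (Finset.sum_le_sum fun p _ => abs_tridiag_le hpos i p).trans (sum_tridiagMajorant_le N _ i)
  have hcol (p : Fin N) : ∑ i, |tridiag N h i p| ≤ 4 / dirMin N h ^ 2 := by
    refine (Finset.sum_le_sum fun i _ => abs_tridiag_le hpos i p).trans ?_
    simpa only [tridiagMajorant_comm N _ _ p] using sum_tridiagMajorant_le N _ p
  have hnorm := specNorm_le_of_abs_sum_le _ (by positivity) hrow hcol
  obtain ⟨j, hj, hmin⟩ := exists_dirMin_eq N h
  refine ⟨hnorm, hnorm.trans ?_⟩
  rw [hmin]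
  exact Finset.le_sup' (fun j => 4 / h j ^ 2) (Finset.mem_range_succ_iff.2 hj)

/-- `‖T‖₂ ≤ 4/h²` where `h = min h_j`; equivalently
`‖T‖₂ ≤ max_j 4/h_j²`. -/
theorem statement0 (N : ℕ) (hN : 2 ≤ N) (h : ℕ → ℝ) (hpos : ∀ j ≤ N, 0 < h j) :
    specNorm (tridiag N h) ≤ 4 / dirMin N h ^ 2 ∧
      specNorm (tridiag N h) ≤
        (Finset.range (N + 1)).sup' Finset.nonempty_range_add_one (fun j => 4 / h j ^ 2) :=
  statement0_general N h hpos

end Kawarada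
end
end

section
/- Let M be a real n × n matrix and K ∈ ℝ with μ(M) ≤ K. Then there exist constants c > 0 and τ̄ > 0 such that for every τ with 0 < τ < τ̄, the matrix I − (τ/2)M is invertible and ‖(I − (τ/2)M)^{−1}(I + (τ/2)M)‖₂ ≤ 1 + τK + cτ². -/
open Matrix
open scoped Kronecker

noncomputable section

namespace Kawarada

/-!
Put `A = (τ/2) • T` and `z = x - A x`. Polarization gives
`‖x + A x‖² = ‖z‖² + 2τ⟪x, T x⟫ ≤ ‖z‖² + 2τK‖x‖²`, and since `‖x‖` and `‖z‖` differ by at most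
`‖A‖‖x‖ = O(τ)‖x‖`, trading `‖x‖²` for `‖z‖²` costs only `O(τ²)‖z‖²`. Hence
`‖(1 - A)⁻¹(1 + A)‖² ≤ 1 + 2τK + O(τ²)`, whose square root is at most `1 + τK + cτ²`.
For `T` the matrix `M` on Euclidean space, `⟪x, T x⟫ ≤ μ(M)‖x‖²` is the Rayleigh bound for the
symmetric part of `M`.
-/

open scoped RealInnerProductSpace

section InnerProductSpace

variable {E : Type*} [NormedAddCommGroup E] [InnerProductSpace ℝ E]

theorem norm_add_sq_eq_norm_sub_sq_add_four_inner (x y : E) :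
    ‖x + y‖ ^ 2 = ‖x - y‖ ^ 2 + 4 * ⟪x, y⟫ := by
  rw [norm_add_sq_real, norm_sub_sq_real]
  ring

theorem abs_sq_sub_sq_le_of_abs_sub_le {s u d : ℝ} (hs : 0 ≤ s) (hd₀ : 0 ≤ d) (hd : d ≤ 1 / 2)
    (h : |s - u| ≤ d * s) : |s ^ 2 - u ^ 2| ≤ 6 * d * u ^ 2 := by
  have hsu : s ≤ 2 * u := by nlinarith [(abs_le.mp h).2]
  calc |s ^ 2 - u ^ 2| = |s - u| * (s + u) := by
        rw [sq_sub_sq, abs_mul, abs_of_nonneg (by linarith : 0 ≤ s + u), mul_comm]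
    _ ≤ d * s * (3 * u) := by gcongr <;> linarith
    _ ≤ d * (2 * u) * (3 * u) := by gcongr; linarith
    _ = 6 * d * u ^ 2 := by ring

theorem norm_add_apply_sq_le (A : E →L[ℝ] E) (hA : ‖A‖ ≤ 1 / 2) {κ : ℝ}
    (hκ : ∀ x, ⟪x, A x⟫ ≤ κ * ‖x‖ ^ 2) (x : E) :
    ‖x + A x‖ ^ 2 ≤ (1 + 4 * κ + 24 * |κ| * ‖A‖) * ‖x - A x‖ ^ 2 := by
  set u := ‖x - A x‖
  have hcomp : |‖x‖ - u| ≤ ‖A‖ * ‖x‖ := by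
    calc |‖x‖ - u| ≤ ‖x - (x - A x)‖ := abs_norm_sub_norm_le _ _
      _ = ‖A x‖ := by rw [sub_sub_cancel]
      _ ≤ ‖A‖ * ‖x‖ := A.le_opNorm x
  have hsq := abs_sq_sub_sq_le_of_abs_sub_le (norm_nonneg x) (norm_nonneg A) hA hcomp
  calc ‖x + A x‖ ^ 2 = u ^ 2 + 4 * ⟪x, A x⟫ := norm_add_sq_eq_norm_sub_sq_add_four_inner x (A x)
    _ ≤ u ^ 2 + 4 * (κ * ‖x‖ ^ 2) := by gcongr; exact hκ x
    _ = u ^ 2 + 4 * κ * u ^ 2 + 4 * (κ * (‖x‖ ^ 2 - u ^ 2)) := by ring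
    _ ≤ u ^ 2 + 4 * κ * u ^ 2 + 4 * (|κ| * (6 * ‖A‖ * u ^ 2)) := by
        have := (le_abs_self _).trans ((abs_mul κ _).trans_le
          (mul_le_mul_of_nonneg_left hsq (abs_nonneg κ)))
        linarith
    _ = (1 + 4 * κ + 24 * |κ| * ‖A‖) * u ^ 2 := by ring

theorem opNorm_mul_one_add_le {A L : E →L[ℝ] E} {C : ℝ} (hC : 0 ≤ C)
    (hleft : L * (1 - A) = 1) (hright : (1 - A) * L = 1)
    (h : ∀ x, ‖x + A x‖ ≤ C * ‖x - A x‖) : ‖L * (1 + A)‖ ≤ C := by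
  refine (L * (1 + A)).opNorm_le_bound hC fun z ↦ ?_
  set x := L z
  have hz : x - A x = z := congr($hright z)
  have hLA : L * (1 + A) = 2 • L - 1 := by
    rw [show (1 : E →L[ℝ] E) + A = 2 • 1 - (1 - A) by module, mul_sub, hleft, mul_smul_comm,
      mul_one]
  have hw : (L * (1 + A)) z = x + A x := by
    rw [hLA, _root_.sub_apply, _root_.smul_apply, one_apply_eq_self]
    nth_rw 2 [← hz]
    module
  rw [hw, ← hz]
  exact h x

theorem one_add_two_mul_add_mul_sq_le_sq {τ K a c : ℝ} (hτ : 0 ≤ τ) (hτK : τ * |K| ≤ 1 / 2)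
    (hc : 0 ≤ c) (hac : a ≤ c) : 1 + 2 * τ * K + a * τ ^ 2 ≤ (1 + τ * K + c * τ ^ 2) ^ 2 := by
  have h : 1 ≤ 2 * (1 + τ * K) := by nlinarith [neg_abs_le K]
  have hcτ : 0 ≤ c * τ ^ 2 := by positivity
  nlinarith [sq_nonneg (τ * K), sq_nonneg (c * τ ^ 2), mul_le_mul_of_nonneg_left h hcτ,
    mul_le_mul_of_nonneg_right hac (sq_nonneg τ)]

theorem opNorm_cayley_le {T L : E →L[ℝ] E} {K τ c : ℝ}
    (hK : ∀ x, ⟪x, T x⟫ ≤ K * ‖x‖ ^ 2) (hτ : 0 ≤ τ) (hτT : τ * ‖T‖ ≤ 1)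
    (hτK : τ * |K| ≤ 1 / 2) (hc : 6 * |K| * ‖T‖ ≤ c)
    (hleft : L * (1 - (τ / 2) • T) = 1) (hright : (1 - (τ / 2) • T) * L = 1) :
    ‖L * (1 + (τ / 2) • T)‖ ≤ 1 + τ * K + c * τ ^ 2 := by
  set A := (τ / 2) • T
  have hnormA : ‖A‖ = τ / 2 * ‖T‖ := by rw [norm_smul, Real.norm_of_nonneg (by positivity)]
  have hA : ‖A‖ ≤ 1 / 2 := by rw [hnormA]; linarith
  have hκ (x : E) : ⟪x, A x⟫ ≤ τ * K / 2 * ‖x‖ ^ 2 := by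
    rw [_root_.smul_apply, real_inner_smul_right]
    nlinarith [hK x]
  have hc₀ : 0 ≤ c := le_trans (by positivity) hc
  have hC : 0 ≤ 1 + τ * K + c * τ ^ 2 := by nlinarith [neg_abs_le K]
  have hcoeff : 1 + 4 * (τ * K / 2) + 24 * |τ * K / 2| * ‖A‖ ≤ (1 + τ * K + c * τ ^ 2) ^ 2 := by
    have := one_add_two_mul_add_mul_sq_le_sq hτ hτK hc₀ hc
    rw [hnormA, abs_div, abs_mul, abs_of_nonneg hτ, abs_two]
    linarith
  refine opNorm_mul_one_add_le hC hleft hright fun x ↦ ?_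
  rw [← pow_le_pow_iff_left₀ (norm_nonneg _) (by positivity) two_ne_zero, mul_pow]
  exact (norm_add_apply_sq_le A hA hκ x).trans (by gcongr)

end InnerProductSpace

section Matrix

variable {m : Type*} [Fintype m] [DecidableEq m]

theorem inner_toEuclideanCLM_transpose (M : Matrix m m ℝ) (x y : EuclideanSpace ℝ m) :
    ⟪x, toEuclideanCLM (𝕜 := ℝ) Mᵀ y⟫ = ⟪toEuclideanCLM (𝕜 := ℝ) M x, y⟫ := by
  rw [real_inner_comm y, inner_toEuclideanCLM, inner_toEuclideanCLM, dotProduct_mulVec,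
    vecMul_transpose, dotProduct_comm]

theorem inner_toEuclideanCLM_symPart (M : Matrix m m ℝ) (x : EuclideanSpace ℝ m) :
    ⟪x, toEuclideanCLM (𝕜 := ℝ) ((2 : ℝ)⁻¹ • (M + Mᵀ)) x⟫ = ⟪x, toEuclideanCLM (𝕜 := ℝ) M x⟫ := by
  rw [map_smul, map_add, _root_.smul_apply, _root_.add_apply, real_inner_smul_right,
    inner_add_right, inner_toEuclideanCLM_transpose, real_inner_comm]
  ring

theorem inner_toEuclideanCLM_le_of_eigenvalues_le {S : Matrix m m ℝ} (hS : S.IsHermitian) {c : ℝ}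
    (hc : ∀ i, hS.eigenvalues i ≤ c) (x : EuclideanSpace ℝ m) :
    ⟪x, toEuclideanCLM (𝕜 := ℝ) S x⟫ ≤ c * ‖x‖ ^ 2 := by
  set b := hS.eigenvectorBasis
  have hb (i : m) : toEuclideanCLM (𝕜 := ℝ) S (b i) = hS.eigenvalues i • b i :=
    congrArg (WithLp.toLp 2) (hS.mulVec_eigenvectorBasis i)
  have hsym (y z : EuclideanSpace ℝ m) :
      ⟪y, toEuclideanCLM (𝕜 := ℝ) S z⟫ = ⟪toEuclideanCLM (𝕜 := ℝ) S y, z⟫ := by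
    conv_lhs => rw [← hS.eq, conjTranspose_eq_transpose_of_trivial]
    exact inner_toEuclideanCLM_transpose S y z
  calc ⟪x, toEuclideanCLM (𝕜 := ℝ) S x⟫
      = ∑ i, ⟪x, b i⟫ * ⟪b i, toEuclideanCLM (𝕜 := ℝ) S x⟫ := (b.sum_inner_mul_inner _ _).symm
    _ = ∑ i, hS.eigenvalues i * ⟪x, b i⟫ ^ 2 := by
        refine Finset.sum_congr rfl fun i _ ↦ ?_
        rw [hsym, hb, real_inner_smul_left, real_inner_comm]
        ring
    _ ≤ ∑ i, c * ⟪x, b i⟫ ^ 2 := by gcongr with i; exact hc i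
    _ = c * ‖x‖ ^ 2 := by
        rw [← Finset.mul_sum, ← real_inner_self_eq_norm_sq, ← b.sum_inner_mul_inner x x]
        simp only [real_inner_comm x, sq]

theorem inner_toEuclideanCLM_le_logNorm (M : Matrix m m ℝ) (x : EuclideanSpace ℝ m) :
    ⟪x, toEuclideanCLM (𝕜 := ℝ) M x⟫ ≤ logNorm M * ‖x‖ ^ 2 := by
  rw [← inner_toEuclideanCLM_symPart]
  exact inner_toEuclideanCLM_le_of_eigenvalues_le (isHermitian_symPart M)
    (fun i ↦ le_ciSup (Set.finite_range _).bddAbove i) x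

theorem specNorm_eq_norm_toEuclideanCLM (A : Matrix m m ℝ) :
    specNorm A = ‖toEuclideanCLM (n := m) (𝕜 := ℝ) A‖ := rfl

end Matrix

/-- if `μ(M) ≤ K` then for all sufficiently small `τ > 0`,
`I − (τ/2)M` is invertible and
`‖(I − (τ/2)M)⁻¹(I + (τ/2)M)‖₂ ≤ 1 + τK + cτ²`. -/
theorem statement12 (n : ℕ) (M : Matrix (Fin n) (Fin n) ℝ) (K : ℝ)
    (hμ : logNorm M ≤ K) :
    ∃ cc > (0 : ℝ), ∃ τbar > (0 : ℝ), ∀ τ : ℝ, 0 < τ → τ < τbar →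
      IsUnit (1 - (τ / 2) • M) ∧
      specNorm ((1 - (τ / 2) • M)⁻¹ * (1 + (τ / 2) • M)) ≤ 1 + τ * K + cc * τ ^ 2 := by
  set e := toEuclideanCLM (n := Fin n) (𝕜 := ℝ)
  set T := e M
  refine ⟨6 * |K| * ‖T‖ + 1, by positivity, 1 / (‖T‖ + 2 * |K| + 1), by positivity,
    fun τ hτ hτbar ↦ ?_⟩
  have hτ' : τ * (‖T‖ + 2 * |K| + 1) < 1 := (lt_div_iff₀ (by positivity)).mp hτbar
  have hτT : τ * ‖T‖ ≤ 1 := by nlinarith [abs_nonneg K]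
  have hτK : τ * |K| ≤ 1 / 2 := by nlinarith [norm_nonneg T]
  have hminus : e (1 - (τ / 2) • M) = 1 - (τ / 2) • T := by rw [map_sub, map_one, map_smul]
  have hplus : e (1 + (τ / 2) • M) = 1 + (τ / 2) • T := by rw [map_add, map_one, map_smul]
  have hunit : IsUnit (1 - (τ / 2) • M) := by
    refine (isUnit_map_iff e _).mp ?_
    rw [hminus]
    refine isUnit_one_sub_of_norm_lt_one ?_
    rw [norm_smul, Real.norm_of_nonneg (by positivity)]
    linarith
  have hdet := (isUnit_iff_isUnit_det _).mp hunit
  refine ⟨hunit, ?_⟩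
  rw [specNorm_eq_norm_toEuclideanCLM, map_mul, hplus]
  refine opNorm_cayley_le (fun x ↦ (inner_toEuclideanCLM_le_logNorm M x).trans (by gcongr))
    hτ.le hτT hτK (le_add_of_nonneg_right zero_le_one) ?_ ?_
  · rw [← hminus, ← map_mul, nonsing_inv_mul _ hdet, map_one]
  · rw [← hminus, ← map_mul, mul_nonsing_inv _ hdet, map_one]

end Kawarada
end
end
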